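/- Let T be a tree, let L be a landmark set of T, and let v be a regular core of T such that the subset of vertices of L lying on the g-legs of v is a local set for v that is not thrifty. Then L is not minimal with respect to set inclusion, i.e., some proper subset of L is also a landmark set of T. -/

import Mathlib

open SimpleGraph

variable {V : Type*} [Fintype V] [DecidableEq V]

/-- A vertex `τ` separates `u` and `w` if its distances to them differ. -/
def Separates (T : SimpleGraph V) (τ u w : V) : Prop :=
  T.dist τ u ≠ T.dist τ w

/-- There are at least two vertices of `L` separating `u` and `w`. -/
def HasTwoSeparators (T : SimpleGraph V) (L : Set V) (u w : V) : Prop :=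
  ∃ τ₁ ∈ L, ∃ τ₂ ∈ L, τ₁ ≠ τ₂ ∧ Separates T τ₁ u w ∧ Separates T τ₂ u w

/-- `L` is a landmark set (non-landmarks model, `k = 2`): every pair of distinct
vertices outside `L` is separated by at least two vertices of `L`. -/
def IsLandmarkSet (T : SimpleGraph V) (L : Set V) : Prop :=
  ∀ u w : V, u ≠ w → u ∉ L → w ∉ L → HasTwoSeparators T L u w

/-- A core is a vertex of degree at least 3. -/
def IsCore (T : SimpleGraph V) [DecidableRel T.Adj] (v : V) : Prop :=
  3 ≤ T.degree v

/-- The subtree of the neighbor `x` of `v`: in a tree, the connected component of `x`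
obtained by removing `v`, characterized via distances (`w` is in it iff the path from
`v` to `w` passes through `x`). -/
def Branch (T : SimpleGraph V) (v x : V) : Set V :=
  {w | T.dist v w = T.dist x w + 1}

/-- The subtree of the neighbor `x` of `v` is a (standard) leg:
a path containing no cores. -/
def IsStandardLeg (T : SimpleGraph V) [DecidableRel T.Adj] (v x : V) : Prop :=
  T.Adj v x ∧ ∀ w ∈ Branch T v x, T.degree w ≤ 2

/-- A short leg consists of a single vertex. -/
def IsShortLeg (T : SimpleGraph V) [DecidableRel T.Adj] (v x : V) : Prop :=
  IsStandardLeg T v x ∧ Branch T v x = {x}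

/-- A long leg is a standard leg that is not short. -/
def IsLongLeg (T : SimpleGraph V) [DecidableRel T.Adj] (v x : V) : Prop :=
  IsStandardLeg T v x ∧ Branch T v x ≠ {x}

/-- A small core: degree exactly 3, with at least two standard legs, one of which is short. -/
def IsSmallCore (T : SimpleGraph V) [DecidableRel T.Adj] (v : V) : Prop :=
  T.degree v = 3 ∧ ∃ x y : V, x ≠ y ∧ IsShortLeg T v x ∧ IsStandardLeg T v y

/-- A regular core is a core that is not small. -/
def IsRegularCore (T : SimpleGraph V) [DecidableRel T.Adj] (v : V) : Prop :=
  IsCore T v ∧ ¬ IsSmallCore T v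

/-- A modified leg of `v`: a subtree of a neighbor of `v` containing exactly one core,
which is a small core. -/
def IsModifiedLeg (T : SimpleGraph V) [DecidableRel T.Adj] (v x : V) : Prop :=
  T.Adj v x ∧ ∃ u ∈ Branch T v x, IsSmallCore T u ∧
    ∀ w ∈ Branch T v x, IsCore T w → w = u

/-- A g-leg is a standard leg or a modified leg. -/
def IsGLeg (T : SimpleGraph V) [DecidableRel T.Adj] (v x : V) : Prop :=
  IsStandardLeg T v x ∨ IsModifiedLeg T v x

/-- A minor core: a regular core which either (i) has at most one g-leg, or
(ii) has degree at least 4, no modified legs, exactly two standard legs one of which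
is short, and every other subtree of a neighbor contains a regular core. -/
def IsMinorCore (T : SimpleGraph V) [DecidableRel T.Adj] (v : V) : Prop :=
  IsRegularCore T v ∧
  ((∀ x y : V, IsGLeg T v x → IsGLeg T v y → x = y) ∨
   (4 ≤ T.degree v ∧ (∀ x : V, ¬ IsModifiedLeg T v x) ∧
    (∃ x y : V, x ≠ y ∧ IsShortLeg T v x ∧ IsStandardLeg T v y ∧
      ∀ z : V, IsStandardLeg T v z → z = x ∨ z = y) ∧
    (∀ z : V, T.Adj v z → ¬ IsGLeg T v z → ∃ w ∈ Branch T v z, IsRegularCore T w)))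

/-- A main core is a regular core that is not minor. -/
def IsMainCore (T : SimpleGraph V) [DecidableRel T.Adj] (v : V) : Prop :=
  IsRegularCore T v ∧ ¬ IsMinorCore T v

/-- The vertices lying on g-legs of `v`. -/
def GLegVerts (T : SimpleGraph V) [DecidableRel T.Adj] (v : V) : Set V :=
  {w | ∃ x : V, IsGLeg T v x ∧ w ∈ Branch T v x}

/-- Type (s,0) solution on the leg of neighbor `x` of `v`: the empty set. -/
def SolS0 (T : SimpleGraph V) (v x : V) (S : Set V) : Prop :=
  S ∩ Branch T v x = ∅

/-- Type (s,1) solution: one vertex of the leg whose position is at least 2. -/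
def SolS1 (T : SimpleGraph V) (v x : V) (S : Set V) : Prop :=
  ∃ w : V, S ∩ Branch T v x = {w} ∧ 2 ≤ T.dist v w

/-- Type (s,2) solution: at least two vertices of the leg. -/
def SolS2 (T : SimpleGraph V) (v x : V) (S : Set V) : Prop :=
  ∃ w₁ ∈ S ∩ Branch T v x, ∃ w₂ ∈ S ∩ Branch T v x, w₁ ≠ w₂

/-- Type (s,3) solution: exactly the vertex with position 1 (that is, `x`). -/
def SolS3 (T : SimpleGraph V) (v x : V) (S : Set V) : Prop :=
  S ∩ Branch T v x = {x}

/-- For a modified leg `x` of `v`: `u` is its small core (at position `T.dist v u`),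
and `a`, `b` are the two vertices at position `T.dist v u + 1`, where `b` is the
vertex of a short leg of `u` (the vertex `ℓ^b`) and `a` is the other one (`ℓ^a`). -/
def MLegPair (T : SimpleGraph V) [DecidableRel T.Adj] (v x u a b : V) : Prop :=
  u ∈ Branch T v x ∧ IsSmallCore T u ∧ a ≠ b ∧
  a ∈ Branch T v x ∧ b ∈ Branch T v x ∧
  T.dist v a = T.dist v u + 1 ∧ T.dist v b = T.dist v u + 1 ∧
  IsShortLeg T u b

/-- Type (m,1) solution on the modified leg `x` of `v`: either `{ℓ^a}` or `{ℓ^b}`. -/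
def SolM1 (T : SimpleGraph V) [DecidableRel T.Adj] (v x : V) (S : Set V) : Prop :=
  ∃ u a b : V, MLegPair T v x u a b ∧
    (S ∩ Branch T v x = {a} ∨ S ∩ Branch T v x = {b})

/-- Type (m,2) solution: contains neither `ℓ^a` nor `ℓ^b`, contains at least two
vertices of positions at least `i + 2`, and no vertex of position `i + 1`. -/
def SolM2 (T : SimpleGraph V) [DecidableRel T.Adj] (v x : V) (S : Set V) : Prop :=
  ∃ u a b : V, MLegPair T v x u a b ∧ a ∉ S ∧ b ∉ S ∧
    (∃ w₁ ∈ S ∩ Branch T v x, ∃ w₂ ∈ S ∩ Branch T v x, w₁ ≠ w₂ ∧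
      T.dist v u + 2 ≤ T.dist v w₁ ∧ T.dist v u + 2 ≤ T.dist v w₂) ∧
    ∀ w ∈ S ∩ Branch T v x, T.dist v w ≠ T.dist v u + 1

/-- Type (m,3) solution: at least two vertices, one of which is `ℓ^a` or `ℓ^b`. -/
def SolM3 (T : SimpleGraph V) [DecidableRel T.Adj] (v x : V) (S : Set V) : Prop :=
  ∃ u a b : V, MLegPair T v x u a b ∧
    (∃ w₁ ∈ S ∩ Branch T v x, ∃ w₂ ∈ S ∩ Branch T v x, w₁ ≠ w₂) ∧
    (a ∈ S ∨ b ∈ S)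

/-- `S` is a local set for the core `v`. -/
def IsLocalSet (T : SimpleGraph V) [DecidableRel T.Adj] (v : V) (S : Set V) : Prop :=
  S ⊆ GLegVerts T v ∧
  -- (1) at most one standard leg has a type (s,0) solution, and every standard leg
  -- has a solution of one of the types (s,0), (s,1), (s,2), (s,3)
  (∀ x y : V, IsStandardLeg T v x → IsStandardLeg T v y → x ≠ y →
    SolS0 T v x S → SolS0 T v y S → False) ∧
  (∀ x : V, IsStandardLeg T v x →
    SolS0 T v x S ∨ SolS1 T v x S ∨ SolS2 T v x S ∨ SolS3 T v x S) ∧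
  -- (2) every modified leg has a solution of type (m,1), (m,2) or (m,3)
  (∀ x : V, IsModifiedLeg T v x →
    SolM1 T v x S ∨ SolM2 T v x S ∨ SolM3 T v x S) ∧
  -- (3) if some standard leg has a type (s,0) solution, no modified leg has type (m,1)
  ((∃ x : V, IsStandardLeg T v x ∧ SolS0 T v x S) →
    ∀ y : V, IsModifiedLeg T v y → ¬ SolM1 T v y S) ∧
  -- (4) if some long leg has a type (s,0) solution, every other long leg has type (s,2)
  (∀ x : V, IsLongLeg T v x → SolS0 T v x S →
    ∀ y : V, IsLongLeg T v y → y ≠ x → SolS2 T v y S) ∧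
  -- (5) if some short leg has a type (s,0) solution, every long leg has type (s,2) or (s,3)
  ((∃ x : V, IsShortLeg T v x ∧ SolS0 T v x S) →
    ∀ y : V, IsLongLeg T v y → SolS2 T v y S ∨ SolS3 T v y S)

/-- A local set is thrifty if its solutions of types (s,2), (m,2) and (m,3)
consist of exactly two vertices each. -/
def IsThrifty (T : SimpleGraph V) [DecidableRel T.Adj] (v : V) (S : Set V) : Prop :=
  (∀ x : V, IsStandardLeg T v x → SolS2 T v x S → (S ∩ Branch T v x).ncard = 2) ∧
  (∀ x : V, IsModifiedLeg T v x → (SolM2 T v x S ∨ SolM3 T v x S) →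
    (S ∩ Branch T v x).ncard = 2)

/-!
On the g-leg `ℓ` of `v` whose solution is not thrifty there are at least three landmarks; we remove
one of them, `r`. Let `B` be the branch of `ℓ`, hanging from the edge `v x`; distances between `B`
and its complement pass through `v`. Hence a pair with exactly one vertex in `B` is separated by
the two landmarks left in `B` or by two landmarks outside `B` (which the local set conditions
provide), depending on which vertex lies deeper below `v`; a pair inside `B` at different depths
is separated by every landmark outside `B`; and `r` separates a pair outside `B` only if its depths
differ, in which case every landmark of `B` does. Finally, a g-leg contains at most one pair of
distinct vertices at equal depth (none on a standard leg, `ℓ^a, ℓ^b` on a modified one), and `r`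
is chosen so that this pair keeps two separators.
-/

namespace SimpleGraph

variable {α : Type*} {T : SimpleGraph α}

lemma Walk.dist_add_dist_le_length {u v w : α} (p : T.Walk u v) (hw : w ∈ p.support) :
    T.dist u w + T.dist w v ≤ p.length := by
  obtain ⟨q, r, rfl⟩ := Walk.mem_support_iff_exists_append.mp hw
  rw [Walk.length_append]
  exact add_le_add (dist_le q) (dist_le r)

lemma mem_branch_self {v x : α} (h : T.Adj v x) : x ∈ Branch T v x := by
  simp [Branch, dist_eq_one_iff_adj.2 h]

lemma ne_of_mem_branch {v x w : α} (hw : w ∈ Branch T v x) : v ≠ w := by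
  rintro rfl
  simp [Branch] at hw

namespace IsTree

lemma exists_adj_dist_add_one (hT : T.IsTree) {r u : α} (h : r ≠ u) :
    ∃ z, T.Adj z u ∧ T.dist r z + 1 = T.dist r u := by
  obtain ⟨p, -, hp⟩ := hT.connected.exists_path_of_dist u r
  have hnil : ¬ p.Nil := Walk.not_nil_of_ne h.symm
  have hadj : T.Adj u p.snd := p.adj_snd hnil
  refine ⟨p.snd, hadj.symm, ?_⟩
  have h₁ : T.dist p.snd r ≤ p.tail.length := dist_le p.tail
  have h₂ := p.length_tail_add_one hnil
  have h₃ := hT.dist_eq_dist_add_one_of_adj r hadj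
  rw [dist_comm] at h₁ hp
  omega

lemma eq_of_adj_of_dist_add_one (hT : T.IsTree) {r u z₁ z₂ : α} (h₁ : T.Adj z₁ u)
    (h₂ : T.Adj z₂ u) (hd₁ : T.dist r z₁ + 1 = T.dist r u) (hd₂ : T.dist r z₂ + 1 = T.dist r u) :
    z₁ = z₂ := by
  obtain ⟨p, hp, -⟩ := hT.connected.exists_path_of_dist r u
  have key : ∀ z, T.Adj z u → T.dist r z + 1 = T.dist r u → z = p.penultimate := by
    intro z hz hd
    obtain ⟨q, hq, hql⟩ := hT.connected.exists_path_of_dist r z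
    have hu : u ∉ q.support := fun hu => by
      have := q.dist_add_dist_le_length hu
      omega
    exact hT.isAcyclic.eq_penultimate_of_adj_end hp hz.symm
      (hT.isAcyclic.mem_support_of_ne_mem_support_of_adj_of_isPath hp hq hz.symm hu)
  exact (key z₁ h₁ hd₁).trans (key z₂ h₂ hd₂).symm

lemma dist_eq_add_one_of_adj_of_ne (hT : T.IsTree) {r c c₁ y : α} (hc : T.Adj c c₁)
    (hd : T.dist r c₁ = T.dist r c + 1) (hy : T.Adj c₁ y) (hyc : y ≠ c) :
    T.dist r y = T.dist r c₁ + 1 :=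
  (hT.dist_eq_dist_add_one_of_adj r hy).resolve_left fun h =>
    hyc (hT.eq_of_adj_of_dist_add_one hy.symm hc h.symm hd.symm)

lemma dist_eq_add_one_of_notMem_branch (hT : T.IsTree) {v x w : α} (hvx : T.Adj v x)
    (hw : w ∉ Branch T v x) : T.dist x w = T.dist v w + 1 := by
  have h := hT.dist_eq_dist_add_one_of_adj w hvx
  have hw' : T.dist v w ≠ T.dist x w + 1 := hw
  rw [dist_comm, dist_comm (u := w)] at h
  omega

lemma eq_of_adj_of_mem_branch_of_notMem (hT : T.IsTree) {v x s t : α} (hvx : T.Adj v x)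
    (hs : s ∈ Branch T v x) (ht : t ∉ Branch T v x) (hst : T.Adj s t) : t = v := by
  have hs' : T.dist v s = T.dist x s + 1 := hs
  have ht' := hT.dist_eq_add_one_of_notMem_branch hvx ht
  have hv := hT.dist_eq_dist_add_one_of_adj v hst
  have hx := hT.dist_eq_dist_add_one_of_adj x hst
  by_contra htv
  obtain ⟨t', ht't, hd⟩ := hT.exists_adj_dist_add_one (Ne.symm htv)
  rcases hT.dist_eq_dist_add_one_of_adj x ht't with h | h
  · have hxv : T.dist x v = 1 := dist_eq_one_iff_adj.2 hvx.symm
    have : T.dist x t' ≤ T.dist x v + T.dist v t' := hT.connected.dist_triangle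
    omega
  · have hsx : T.dist x s + 1 = T.dist x t := by omega
    have := hT.eq_of_adj_of_dist_add_one ht't hst (by omega) hsx
    subst this
    omega

lemma dist_eq_add_of_mem_branch_of_notMem (hT : T.IsTree) {v x w u : α} (hvx : T.Adj v x)
    (hw : w ∈ Branch T v x) (hu : u ∉ Branch T v x) :
    T.dist w u = T.dist w v + T.dist v u := by
  obtain ⟨p, -, hp⟩ := hT.connected.exists_path_of_dist w u
  obtain ⟨d, hd, hd₁, hd₂⟩ := p.exists_boundary_dart _ hw hu
  have hv : v ∈ p.support :=
    hT.eq_of_adj_of_mem_branch_of_notMem hvx hd₁ hd₂ d.adj ▸ p.dart_snd_mem_support_of_mem_darts hd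
  have h₁ := p.dist_add_dist_le_length hv
  have h₂ : T.dist w u ≤ T.dist w v + T.dist v u := hT.connected.dist_triangle
  omega

lemma mem_branch_of_adj (hT : T.IsTree) {v x w z : α} (hvx : T.Adj v x)
    (hw : w ∈ Branch T v x) (hwz : T.Adj w z) (hz : z ≠ v) : z ∈ Branch T v x :=
  Classical.byContradiction fun h => hz (hT.eq_of_adj_of_mem_branch_of_notMem hvx hw h hwz)

lemma eq_of_mem_branch_of_dist_eq_one (hT : T.IsTree) {v x w : α} (hw : w ∈ Branch T v x)
    (h : T.dist v w = 1) : w = x := by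
  have : T.dist v w = T.dist x w + 1 := hw
  exact (hT.connected.dist_eq_zero_iff.1 (by omega)).symm

lemma disjoint_branch (hT : T.IsTree) {v y₁ y₂ : α} (h₁ : T.Adj v y₁) (h₂ : T.Adj v y₂)
    (hne : y₁ ≠ y₂) : Disjoint (Branch T v y₁) (Branch T v y₂) := by
  refine Set.disjoint_left.2 fun w hw₁ hw₂ => hne ?_
  have hw₁ : T.dist v w = T.dist y₁ w + 1 := hw₁
  have hw₂ : T.dist v w = T.dist y₂ w + 1 := hw₂
  rw [dist_comm (u := v), dist_comm (u := y₁)] at hw₁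
  rw [dist_comm (u := v), dist_comm (u := y₂)] at hw₂
  exact hT.eq_of_adj_of_dist_add_one h₁.symm h₂.symm hw₁.symm hw₂.symm

lemma branch_subset_branch (hT : T.IsTree) {v y c c₁ : α} (hvy : T.Adj v y)
    (hc : c ∈ Branch T v y) (hcc₁ : T.Adj c c₁) (hd : T.dist v c₁ = T.dist v c + 1) :
    Branch T c c₁ ⊆ Branch T v y := by
  intro w hw
  have hv : v ∉ Branch T c c₁ := fun h => by
    have h' : T.dist c v = T.dist c₁ v + 1 := h
    rw [dist_comm, dist_comm (u := c₁)] at h'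
    omega
  have h₁ := hT.dist_eq_add_of_mem_branch_of_notMem hcc₁ hw hv
  by_contra hwB
  have h₂ := hT.dist_eq_add_of_mem_branch_of_notMem hvy hc hwB
  have hc' : T.dist v c = T.dist y c + 1 := hc
  rw [dist_comm (u := w), dist_comm (u := w)] at h₁
  rw [dist_comm (u := c) (v := v)] at h₁ h₂
  omega

lemma branch_eq_singleton_iff (hT : T.IsTree) {c d : α} (h : T.Adj c d) :
    Branch T c d = {d} ↔ ∀ y, T.Adj d y → y = c := by
  constructor
  · intro hB y hy
    by_contra hyc
    have h₂ := hT.dist_eq_add_one_of_adj_of_ne (r := c) h (by simpa using h) hy hyc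
    have hyB : y ∈ Branch T c d := by
      show T.dist c y = T.dist d y + 1
      rw [h₂, dist_eq_one_iff_adj.2 h, dist_eq_one_iff_adj.2 hy]
    rw [hB, Set.mem_singleton_iff] at hyB
    exact T.ne_of_adj hy hyB.symm
  · intro hleaf
    refine Set.eq_singleton_iff_unique_mem.2 ⟨mem_branch_self h, fun w hw => ?_⟩
    by_contra hwd
    obtain ⟨z, hzd, hz⟩ := hT.exists_adj_dist_add_one hwd
    have hw : T.dist c w = T.dist d w + 1 := hw
    rw [hleaf z hzd.symm, dist_comm, dist_comm (u := w)] at hz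
    omega

lemma separates_iff_of_notMem_branch (hT : T.IsTree) {v x τ u w : α} (hvx : T.Adj v x)
    (hτ : τ ∉ Branch T v x) (hu : u ∈ Branch T v x) (hw : w ∈ Branch T v x) :
    Separates T τ u w ↔ T.dist v u ≠ T.dist v w := by
  have h₁ := hT.dist_eq_add_of_mem_branch_of_notMem hvx hu hτ
  have h₂ := hT.dist_eq_add_of_mem_branch_of_notMem hvx hw hτ
  rw [Separates, dist_comm, h₁, dist_comm (u := τ), h₂, dist_comm (u := u), dist_comm (u := w)]
  omega

lemma separates_iff_of_mem_branch (hT : T.IsTree) {v x τ u w : α} (hvx : T.Adj v x)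
    (hτ : τ ∈ Branch T v x) (hu : u ∉ Branch T v x) (hw : w ∉ Branch T v x) :
    Separates T τ u w ↔ T.dist v u ≠ T.dist v w := by
  rw [Separates, hT.dist_eq_add_of_mem_branch_of_notMem hvx hτ hu,
    hT.dist_eq_add_of_mem_branch_of_notMem hvx hτ hw]
  omega

lemma separates_of_mem_branch_of_dist_le (hT : T.IsTree) {v x τ u w : α} (hvx : T.Adj v x)
    (hτ : τ ∈ Branch T v x) (hu : u ∈ Branch T v x) (hw : w ∉ Branch T v x)
    (hd : T.dist v u ≤ T.dist v w) : Separates T τ u w := by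
  have hτw := hT.dist_eq_add_of_mem_branch_of_notMem hvx hτ hw
  have hτ' : T.dist v τ = T.dist x τ + 1 := hτ
  have hu' : T.dist v u = T.dist x u + 1 := hu
  have htri : T.dist τ u ≤ T.dist τ x + T.dist x u := hT.connected.dist_triangle
  rw [dist_comm (u := τ) (v := x)] at htri
  rw [dist_comm (u := τ) (v := v)] at hτw
  unfold Separates
  omega

lemma separates_of_notMem_branch_of_dist_lt (hT : T.IsTree) {v x τ u w : α}
    (hvx : T.Adj v x) (hτ : τ ∉ Branch T v x) (hu : u ∈ Branch T v x)
    (hd : T.dist v w < T.dist v u) : Separates T τ u w := by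
  have hτu := hT.dist_eq_add_of_mem_branch_of_notMem hvx hu hτ
  have htri : T.dist τ w ≤ T.dist τ v + T.dist v w := hT.connected.dist_triangle
  rw [dist_comm (u := u), dist_comm (u := u)] at hτu
  have hτv : T.dist τ v = T.dist v τ := dist_comm
  unfold Separates
  omega

lemma mem_or_mem_of_subsingleton (hT : T.IsTree) {L : Set α} (hL : IsLandmarkSet T L)
    {v x w z : α} (hvx : T.Adj v x) (hs : (L ∩ Branch T v x).Subsingleton)
    (hw : w ∈ Branch T v x) (hz : z ∈ Branch T v x) (hne : w ≠ z)
    (hd : T.dist v w = T.dist v z) : w ∈ L ∨ z ∈ L := by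
  by_contra h
  push Not at h
  obtain ⟨τ₁, h₁, τ₂, h₂, hτ, hs₁, hs₂⟩ := hL w z hne h.1 h.2
  have mem {τ : α} (hτ : Separates T τ w z) : τ ∈ Branch T v x :=
    Classical.byContradiction fun h => (hT.separates_iff_of_notMem_branch hvx h hw hz).1 hτ hd
  exact hτ (hs ⟨h₁, mem hs₁⟩ ⟨h₂, mem hs₂⟩)

lemma exists_mem_of_subsingleton_of_dist_eq (hT : T.IsTree) {L : Set α}
    (hL : IsLandmarkSet T L) {v x w z : α} (hvx : T.Adj v x)
    (hs : (L ∩ Branch T v x).Subsingleton) (hw : w ∈ Branch T v x) (hz : z ∈ Branch T v x)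
    (hne : w ≠ z) (hd : T.dist v w = T.dist v z) :
    ∃ κ ∈ L ∩ Branch T v x, T.dist v κ = T.dist v w := by
  rcases hT.mem_or_mem_of_subsingleton hL hvx hs hw hz hne hd with h | h
  exacts [⟨w, ⟨h, hw⟩, rfl⟩, ⟨z, ⟨h, hz⟩, hd.symm⟩]

end IsTree

end SimpleGraph

section Separators

variable {α : Type*} {T : SimpleGraph α} {L : Set α}

lemma HasTwoSeparators.symm {u w : α} (h : HasTwoSeparators T L u w) :
    HasTwoSeparators T L w u := by
  obtain ⟨τ₁, h₁, τ₂, h₂, hne, hs₁, hs₂⟩ := h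
  exact ⟨τ₁, h₁, τ₂, h₂, hne, hs₁.symm, hs₂.symm⟩

lemma hasTwoSeparators_of_nontrivial {P : Set α} {u w : α} (hPL : P ⊆ L) (hP : P.Nontrivial)
    (hsep : ∀ τ ∈ P, Separates T τ u w) : HasTwoSeparators T L u w := by
  obtain ⟨τ₁, h₁, τ₂, h₂, hne⟩ := hP
  exact ⟨τ₁, hPL h₁, τ₂, hPL h₂, hne, hsep τ₁ h₁, hsep τ₂ h₂⟩

lemma HasTwoSeparators.sdiff_singleton {u w r : α} (h : HasTwoSeparators T L u w)
    (hr : ¬ Separates T r u w) : HasTwoSeparators T (L \ {r}) u w := by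
  obtain ⟨τ₁, h₁, τ₂, h₂, hne, hs₁, hs₂⟩ := h
  exact ⟨τ₁, ⟨h₁, fun e => hr (e ▸ hs₁)⟩, τ₂, ⟨h₂, fun e => hr (e ▸ hs₂)⟩, hne, hs₁, hs₂⟩

lemma Set.nontrivial_sdiff_singleton_of_two_lt_ncard [Finite α] {P : Set α} (hP : 2 < P.ncard)
    (a : α) : (P \ {a}).Nontrivial := by
  have := P.pred_ncard_le_ncard_sdiff_singleton a
  exact Set.one_lt_ncard_iff_nontrivial.1 (by omega)

/-- Drop a landmark of `P` that does not separate `p` and `q` if there is one, and any landmark of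
`P` otherwise. -/
lemma IsLandmarkSet.exists_mem_hasTwoSeparators_sdiff_singleton [Finite α]
    (hL : IsLandmarkSet T L) {P : Set α} (hPL : P ⊆ L) (hP : 2 < P.ncard) (p q : α) :
    ∃ r ∈ P, p ≠ q → p ∉ L \ {r} → q ∉ L \ {r} → HasTwoSeparators T (L \ {r}) p q := by
  by_cases hpq : p ∈ L ∨ q ∈ L
  · obtain ⟨r, ⟨hr, hrp⟩, hrq⟩ := (Set.nontrivial_sdiff_singleton_of_two_lt_ncard hP p).exists_ne q
    refine ⟨r, hr, fun _ hp hq => ?_⟩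
    rcases hpq with h | h
    · exact absurd ⟨h, hrp ∘ Eq.symm⟩ hp
    · exact absurd ⟨h, hrq ∘ Eq.symm⟩ hq
  push Not at hpq
  by_cases hsep : ∃ r ∈ P, ¬ Separates T r p q
  · obtain ⟨r, hr, hrs⟩ := hsep
    exact ⟨r, hr, fun hne _ _ => (hL p q hne hpq.1 hpq.2).sdiff_singleton hrs⟩
  push Not at hsep
  obtain ⟨r, hr⟩ := Set.nonempty_of_ncard_ne_zero (s := P) (by omega)
  refine ⟨r, hr, fun _ _ _ => hasTwoSeparators_of_nontrivial
    (Set.sdiff_subset_sdiff_left hPL) (Set.nontrivial_sdiff_singleton_of_two_lt_ncard hP r)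
    fun τ hτ => hsep τ hτ.1⟩

/-- Every pair other than one at equal depth inside the branch is separated by the landmarks on
one of the two sides of the edge `v x`. -/
theorem IsLandmarkSet.sdiff_singleton_of_branch (hT : T.IsTree) (hL : IsLandmarkSet T L)
    {v x r : α} (hvx : T.Adj v x) (hout : (L \ Branch T v x).Nontrivial)
    (hr : r ∈ L ∩ Branch T v x) (hin : ((L ∩ Branch T v x) \ {r}).Nontrivial)
    (hpairs : ∀ u ∈ Branch T v x, ∀ w ∈ Branch T v x, u ≠ w → T.dist v u = T.dist v w →
      u ∉ L \ {r} → w ∉ L \ {r} → HasTwoSeparators T (L \ {r}) u w) :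
    IsLandmarkSet T (L \ {r}) := by
  have sep_out {u w : α} (h : ∀ τ ∈ L \ Branch T v x, Separates T τ u w) :
      HasTwoSeparators T (L \ {r}) u w :=
    hasTwoSeparators_of_nontrivial (Set.sdiff_subset_sdiff_right (by simpa using hr.2)) hout h
  have sep_in {u w : α} (h : ∀ τ ∈ (L ∩ Branch T v x) \ {r}, Separates T τ u w) :
      HasTwoSeparators T (L \ {r}) u w :=
    hasTwoSeparators_of_nontrivial (Set.sdiff_subset_sdiff_left Set.inter_subset_left) hin h
  have mixed {u w : α} (hu : u ∈ Branch T v x) (hw : w ∉ Branch T v x) :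
      HasTwoSeparators T (L \ {r}) u w := by
    rcases le_or_gt (T.dist v u) (T.dist v w) with h | h
    · exact sep_in fun τ hτ => hT.separates_of_mem_branch_of_dist_le hvx hτ.1.2 hu hw h
    · exact sep_out fun τ hτ => hT.separates_of_notMem_branch_of_dist_lt hvx hτ.2 hu h
  intro u w hne hu' hw'
  by_cases hu : u ∈ Branch T v x <;> by_cases hw : w ∈ Branch T v x
  · by_cases hd : T.dist v u = T.dist v w
    · exact hpairs u hu w hw hne hd hu' hw'
    · exact sep_out fun τ hτ => (hT.separates_iff_of_notMem_branch hvx hτ.2 hu hw).2 hd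
  · exact mixed hu hw
  · exact (mixed hw hu).symm
  · have hnot {z : α} (hz : z ∉ Branch T v x) (hz' : z ∉ L \ {r}) : z ∉ L :=
      fun h => hz' ⟨h, fun e => hz (e ▸ hr.2)⟩
    by_cases hsep : Separates T r u w
    · have hd := (hT.separates_iff_of_mem_branch hvx hr.2 hu hw).1 hsep
      exact sep_in fun τ hτ => (hT.separates_iff_of_mem_branch hvx hτ.1.2 hu hw).2 hd
    · exact (hL u w hne (hnot hu hu') (hnot hw hw')).sdiff_singleton hsep

end Separators

namespace SimpleGraph

variable {α : Type*} [Fintype α] {T : SimpleGraph α} [DecidableRel T.Adj]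

variable (T) in
noncomputable def childFinset (r c : α) : Finset α :=
  {z ∈ T.neighborFinset c | T.dist r z = T.dist r c + 1}

@[simp]
lemma mem_childFinset {r c z : α} :
    z ∈ T.childFinset r c ↔ T.Adj c z ∧ T.dist r z = T.dist r c + 1 := by
  simp [childFinset]

namespace IsTree

lemma card_childFinset_add_one (hT : T.IsTree) {r c : α} (h : r ≠ c) :
    (T.childFinset r c).card + 1 = T.degree c := by
  classical
  obtain ⟨p, hpc, hp⟩ := hT.exists_adj_dist_add_one h
  have hnbr : T.neighborFinset c = insert p (T.childFinset r c) := by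
    ext z
    simp only [mem_neighborFinset, Finset.mem_insert, mem_childFinset]
    constructor
    · intro hz
      rcases hT.dist_eq_dist_add_one_of_adj r hz with h' | h'
      · exact Or.inl (hT.eq_of_adj_of_dist_add_one hz.symm hpc h'.symm hp)
      · exact Or.inr ⟨hz, h'⟩
    · rintro (rfl | ⟨hz, -⟩)
      exacts [hpc.symm, hz]
  rw [← card_neighborFinset_eq_degree, hnbr, Finset.card_insert_of_notMem]
  simp only [mem_childFinset, not_and]
  omega

lemma exists_ne_mem_childFinset (hT : T.IsTree) {r c : α} (h : r ≠ c) (hc : IsCore T c) :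
    ∃ c₁ ∈ T.childFinset r c, ∃ c₂ ∈ T.childFinset r c, c₁ ≠ c₂ := by
  have := hT.card_childFinset_add_one h
  exact Finset.one_lt_card.1 (by unfold IsCore at hc; omega)

lemma eq_of_mem_childFinset_of_degree_le_two (hT : T.IsTree) {r c w z : α} (h : r ≠ c)
    (hdeg : T.degree c ≤ 2) (hw : w ∈ T.childFinset r c) (hz : z ∈ T.childFinset r c) :
    w = z := by
  have := hT.card_childFinset_add_one h
  exact Finset.card_le_one.1 (by omega) w hw z hz

lemma ne_of_mem_childFinset (hT : T.IsTree) {r c c' w z : α} (hw : w ∈ T.childFinset r c)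
    (hz : z ∈ T.childFinset r c') (hcc' : c ≠ c') : w ≠ z := by
  rintro rfl
  rw [mem_childFinset] at hw hz
  exact hcc' (hT.eq_of_adj_of_dist_add_one (r := r) hw.1 hz.1 (by omega) (by omega))

lemma mem_branch_of_mem_childFinset (hT : T.IsTree) {v x c c₁ : α} (hvx : T.Adj v x)
    (hc : c ∈ Branch T v x) (hc₁ : c₁ ∈ T.childFinset v c) : c₁ ∈ Branch T v x := by
  rw [mem_childFinset] at hc₁
  refine hT.mem_branch_of_adj hvx hc hc₁.1 ?_
  rintro rfl
  simp at hc₁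

lemma exists_mem_childFinset_of_branch_ne_singleton (hT : T.IsTree) {r c c₁ : α}
    (hc₁ : c₁ ∈ T.childFinset r c) (h : Branch T c c₁ ≠ {c₁}) :
    ∃ s, s ∈ T.childFinset r c₁ := by
  rw [mem_childFinset] at hc₁
  rw [Ne, hT.branch_eq_singleton_iff hc₁.1] at h
  push Not at h
  obtain ⟨s, hs, hsc⟩ := h
  exact ⟨s, mem_childFinset.2 ⟨hs, hT.dist_eq_add_one_of_adj_of_ne hc₁.1 hc₁.2 hs hsc⟩⟩

/-- By induction on the depth: two such vertices have the same parent, which has at most one child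
outside `E`. -/
lemma eq_of_mem_branch_of_dist_eq (hT : T.IsTree) {v x : α} (hvx : T.Adj v x) {E : Set α}
    (hE : ∀ e ∈ E, T.childFinset v e = ∅)
    (hchild : ∀ p ∈ Branch T v x, ∀ w ∈ T.childFinset v p, ∀ z ∈ T.childFinset v p,
      w ∉ E → z ∉ E → w = z)
    {w z : α} (hw : w ∈ Branch T v x) (hz : z ∈ Branch T v x) (hwE : w ∉ E) (hzE : z ∉ E)
    (hd : T.dist v w = T.dist v z) : w = z := by
  obtain ⟨n, hn⟩ : ∃ n, T.dist v w = n + 1 := ⟨T.dist x w, hw⟩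
  induction n generalizing w z with
  | zero =>
    rw [hT.eq_of_mem_branch_of_dist_eq_one hw hn, hT.eq_of_mem_branch_of_dist_eq_one hz (hd ▸ hn)]
  | succ n ih =>
    have parent {w : α} (hw : w ∈ Branch T v x) (hwE : w ∉ E) (hn : T.dist v w = n + 2) :
        ∃ p ∈ Branch T v x, p ∉ E ∧ w ∈ T.childFinset v p ∧ T.dist v p = n + 1 := by
      obtain ⟨p, hpw, hp⟩ := hT.exists_adj_dist_add_one (ne_of_mem_branch hw)
      have hwp : w ∈ T.childFinset v p := mem_childFinset.2 ⟨hpw, by omega⟩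
      refine ⟨p, hT.mem_branch_of_adj hvx hw hpw.symm ?_, fun hpE => by simp [hE p hpE] at hwp,
        hwp, by omega⟩
      rintro rfl
      simp at hp
      omega
    obtain ⟨p, hpB, hpE, hwp, hp⟩ := parent hw hwE hn
    obtain ⟨p', hp'B, hp'E, hzp', hp'⟩ := parent hz hzE (hd ▸ hn)
    obtain rfl := ih hpB hp'B hpE hp'E (hp.trans hp'.symm) hp
    exact hchild p hpB w hwp z hzp' hwE hzE

lemma exists_mem_childFinset_of_subsingleton (hT : T.IsTree) {L : Set α}
    (hL : IsLandmarkSet T L) {v x c : α} (hvx : T.Adj v x)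
    (hs : (L ∩ Branch T v x).Subsingleton) (hc : c ∈ Branch T v x) (hcore : IsCore T c) :
    ∃ κ ∈ T.childFinset v c, κ ∈ L ∩ Branch T v x := by
  obtain ⟨c₁, h₁, c₂, h₂, hne⟩ := hT.exists_ne_mem_childFinset (ne_of_mem_branch hc) hcore
  have hB₁ := hT.mem_branch_of_mem_childFinset hvx hc h₁
  have hB₂ := hT.mem_branch_of_mem_childFinset hvx hc h₂
  rcases hT.mem_or_mem_of_subsingleton hL hvx hs hB₁ hB₂ hne
    (by rw [(mem_childFinset.1 h₁).2, (mem_childFinset.1 h₂).2]) with h | h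
  exacts [⟨c₁, h₁, h, hB₁⟩, ⟨c₂, h₂, h, hB₂⟩]

lemma nonempty_inter_branch_of_isCore (hT : T.IsTree) {L : Set α} (hL : IsLandmarkSet T L)
    {v x c : α} (hvx : T.Adj v x) (hc : c ∈ Branch T v x) (hcore : IsCore T c) :
    (L ∩ Branch T v x).Nonempty := by
  by_contra h
  rw [Set.not_nonempty_iff_eq_empty] at h
  obtain ⟨κ, -, hκ⟩ :=
    hT.exists_mem_childFinset_of_subsingleton hL hvx (h ▸ Set.subsingleton_empty) hc hcore
  exact h.subset hκ

lemma nontrivial_inter_branch_of_four_le_degree (hT : T.IsTree) {L : Set α}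
    (hL : IsLandmarkSet T L) {v y c : α} (hvy : T.Adj v y) (hc : c ∈ Branch T v y)
    (hdeg : 4 ≤ T.degree c) : (L ∩ Branch T v y).Nontrivial := by
  by_contra hs
  rw [Set.not_nontrivial_iff] at hs
  have := hT.card_childFinset_add_one (ne_of_mem_branch hc)
  obtain ⟨e₁, h₁, e₂, h₂, e₃, h₃, h₁₂, h₁₃, h₂₃⟩ :=
    Finset.two_lt_card.1 (by omega : 2 < (T.childFinset v c).card)
  have hB {e : α} (he : e ∈ T.childFinset v c) := hT.mem_branch_of_mem_childFinset hvy hc he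
  have pair {e e' : α} (he : e ∈ T.childFinset v c) (he' : e' ∈ T.childFinset v c)
      (hne : e ≠ e') : e ∈ L ∨ e' ∈ L :=
    hT.mem_or_mem_of_subsingleton hL hvy hs (hB he) (hB he') hne
      ((mem_childFinset.1 he).2.trans (mem_childFinset.1 he').2.symm)
  rcases pair h₁ h₂ h₁₂ with h | h
  · rcases pair h₂ h₃ h₂₃ with h' | h'
    exacts [h₁₂ (hs ⟨h, hB h₁⟩ ⟨h', hB h₂⟩), h₁₃ (hs ⟨h, hB h₁⟩ ⟨h', hB h₃⟩)]
  · rcases pair h₁ h₃ h₁₃ with h' | h'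
    exacts [h₁₂ (hs ⟨h', hB h₁⟩ ⟨h, hB h₂⟩), h₂₃ (hs ⟨h, hB h₂⟩ ⟨h', hB h₃⟩)]

lemma nontrivial_inter_branch_of_two_cores (hT : T.IsTree) {L : Set α}
    (hL : IsLandmarkSet T L) {v y c c' : α} (hvy : T.Adj v y) (hc : c ∈ Branch T v y)
    (hc' : c' ∈ Branch T v y) (hcore : IsCore T c) (hcore' : IsCore T c') (hne : c ≠ c') :
    (L ∩ Branch T v y).Nontrivial := by
  by_contra hs
  rw [Set.not_nontrivial_iff] at hs
  obtain ⟨κ, hκ, hκL⟩ := hT.exists_mem_childFinset_of_subsingleton hL hvy hs hc hcore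
  obtain ⟨κ', hκ', hκ'L⟩ := hT.exists_mem_childFinset_of_subsingleton hL hvy hs hc' hcore'
  exact hT.ne_of_mem_childFinset hκ hκ' hne (hs hκL hκ'L)

lemma nontrivial_inter_branch_of_branch_ne_singleton (hT : T.IsTree) {L : Set α}
    (hL : IsLandmarkSet T L) {v y c c₁ c₂ : α} (hvy : T.Adj v y) (hc : c ∈ Branch T v y)
    (h₁ : c₁ ∈ T.childFinset v c) (h₂ : c₂ ∈ T.childFinset v c) (hne : c₁ ≠ c₂)
    (hl₁ : Branch T c c₁ ≠ {c₁}) (hl₂ : Branch T c c₂ ≠ {c₂}) :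
    (L ∩ Branch T v y).Nontrivial := by
  by_contra hs
  rw [Set.not_nontrivial_iff] at hs
  obtain ⟨s₁, hs₁⟩ := hT.exists_mem_childFinset_of_branch_ne_singleton h₁ hl₁
  obtain ⟨s₂, hs₂⟩ := hT.exists_mem_childFinset_of_branch_ne_singleton h₂ hl₂
  have hB₁ := hT.mem_branch_of_mem_childFinset hvy hc h₁
  have hB₂ := hT.mem_branch_of_mem_childFinset hvy hc h₂
  rw [mem_childFinset] at h₁ h₂ hs₁ hs₂
  obtain ⟨κ, hκ, hdκ⟩ :=
    hT.exists_mem_of_subsingleton_of_dist_eq hL hvy hs hB₁ hB₂ hne (by omega)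
  obtain ⟨σ, hσ, hdσ⟩ := hT.exists_mem_of_subsingleton_of_dist_eq hL hvy hs
    (hT.mem_branch_of_mem_childFinset hvy hB₁ (mem_childFinset.2 hs₁))
    (hT.mem_branch_of_mem_childFinset hvy hB₂ (mem_childFinset.2 hs₂))
    (hT.ne_of_mem_childFinset (mem_childFinset.2 hs₁) (mem_childFinset.2 hs₂) hne) (by omega)
  have := congrArg (T.dist v) (hs hκ hσ)
  omega

/-- If the branch had at most one landmark, it would lie in every pair of distinct vertices of equal
depth. A core of degree at least 4, a second core, or two long legs of a single core of degree 3
each yield pairs without a common vertex; the remaining case is a modified leg. -/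
lemma nontrivial_inter_branch_of_isCore (hT : T.IsTree) {L : Set α} (hL : IsLandmarkSet T L)
    {v y c : α} (hvy : T.Adj v y) (hnm : ¬ IsModifiedLeg T v y) (hc : c ∈ Branch T v y)
    (hcore : IsCore T c) : (L ∩ Branch T v y).Nontrivial := by
  by_cases hdeg : 4 ≤ T.degree c
  · exact hT.nontrivial_inter_branch_of_four_le_degree hL hvy hc hdeg
  by_cases hc' : ∃ c' ∈ Branch T v y, IsCore T c' ∧ c' ≠ c
  · obtain ⟨c', hc'B, hcore', hne⟩ := hc'
    exact hT.nontrivial_inter_branch_of_two_cores hL hvy hc hc'B hcore hcore' hne.symm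
  push Not at hc'
  have hstd {c' : α} (h : c' ∈ T.childFinset v c) : IsStandardLeg T c c' := by
    rw [mem_childFinset] at h
    refine ⟨h.1, fun w hw => ?_⟩
    by_contra h3
    exact ne_of_mem_branch hw
      (hc' w (hT.branch_subset_branch hvy hc h.1 h.2 hw) (by unfold IsCore; omega)).symm
  have hlong {c' c'' : α} (h' : c' ∈ T.childFinset v c) (h'' : c'' ∈ T.childFinset v c)
      (hne : c' ≠ c'') : Branch T c c' ≠ {c'} := fun hshort =>
    hnm ⟨hvy, c, hc, ⟨by unfold IsCore at hcore; omega, c', c'', hne, ⟨hstd h', hshort⟩, hstd h''⟩,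
      hc'⟩
  obtain ⟨c₁, h₁, c₂, h₂, hne⟩ := hT.exists_ne_mem_childFinset (ne_of_mem_branch hc) hcore
  exact hT.nontrivial_inter_branch_of_branch_ne_singleton hL hvy hc h₁ h₂ hne
    (hlong h₁ h₂ hne) (hlong h₂ h₁ hne.symm)

end IsTree

end SimpleGraph

section Legs

variable {α : Type*} [Fintype α] {T : SimpleGraph α} [DecidableRel T.Adj]

lemma IsStandardLeg.eq_of_dist_eq {v x w z : α} (hx : IsStandardLeg T v x) (hT : T.IsTree)
    (hw : w ∈ Branch T v x) (hz : z ∈ Branch T v x) (hd : T.dist v w = T.dist v z) : w = z :=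
  hT.eq_of_mem_branch_of_dist_eq hx.1 (E := ∅) (by simp)
    (fun p hp _ hw _ hz _ _ =>
      hT.eq_of_mem_childFinset_of_degree_le_two (ne_of_mem_branch hp) (hx.2 p hp) hw hz)
    hw hz (Set.notMem_empty w) (Set.notMem_empty z) hd

lemma IsModifiedLeg.eq_or_eq_of_dist_eq {v x u a b w z : α} (hx : IsModifiedLeg T v x)
    (hT : T.IsTree) (hp : MLegPair T v x u a b) (hw : w ∈ Branch T v x) (hz : z ∈ Branch T v x)
    (hne : w ≠ z) (hd : T.dist v w = T.dist v z) : (w = a ∧ z = b) ∨ (w = b ∧ z = a) := by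
  obtain ⟨huB, ⟨hu3, -⟩, hab, haB, -, hda, hdb, ⟨⟨hub, -⟩, hbs⟩⟩ := hp
  obtain ⟨hvx, u', -, -, hcore⟩ := hx
  have hcore' {p : α} (hp : p ∈ Branch T v x) (h3 : 3 ≤ T.degree p) : p = u :=
    (hcore p hp h3).trans (hcore u huB hu3.ge).symm
  have hleaf := (hT.branch_eq_singleton_iff hub).1 hbs
  have huniq {w z : α} (hw : w ∈ Branch T v x) (hz : z ∈ Branch T v x) (hwb : w ≠ b)
      (hzb : z ≠ b) (hd : T.dist v w = T.dist v z) : w = z := by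
    refine hT.eq_of_mem_branch_of_dist_eq hvx (E := {b}) ?_ ?_ hw hz hwb hzb hd
    · rintro e rfl
      ext y
      simp only [mem_childFinset, Finset.notMem_empty, iff_false, not_and]
      intro hy
      rw [hleaf y hy]
      omega
    · intro p hp w hw z hz hwb hzb
      by_cases hpu : p = u
      · subst hpu
        by_contra hwz
        have hb : b ∈ T.childFinset v p := mem_childFinset.2 ⟨hub, hdb⟩
        have := Finset.two_lt_card.2 ⟨w, hw, z, hz, b, hb, hwz, hwb, hzb⟩
        have := hT.card_childFinset_add_one (ne_of_mem_branch hp)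
        omega
      · exact hT.eq_of_mem_childFinset_of_degree_le_two (ne_of_mem_branch hp)
          (not_lt.1 fun h3 => hpu (hcore' hp h3)) hw hz
  by_cases hwb : w = b
  · rw [hwb] at hd
    exact .inr ⟨hwb, huniq hz haB (fun h => hne (hwb.trans h.symm)) hab (by omega)⟩
  · by_cases hzb : z = b
    · rw [hzb] at hd
      exact .inl ⟨huniq hw haB hwb hab (by omega), hzb⟩
    · exact absurd (huniq hw hz hwb hzb hd) hne

end Legs

section LocalSets

variable {α : Type*} [Fintype α] {T : SimpleGraph α} [DecidableRel T.Adj] {L : Set α} {v : α}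

lemma IsLocalSet.nontrivial_inter_branch_of_solS0 (hls : IsLocalSet T v (L ∩ GLegVerts T v))
    (hT : T.IsTree) (hL : IsLandmarkSet T L) (hv : ¬ IsSmallCore T v) (hdeg : T.degree v = 3)
    {y₁ y₂ : α} (h₁ : IsStandardLeg T v y₁) (h0 : SolS0 T v y₁ (L ∩ GLegVerts T v))
    (hy₂ : T.Adj v y₂) (hne : y₁ ≠ y₂) : (L ∩ Branch T v y₂).Nontrivial := by
  obtain ⟨-, -, -, hmod, hm1, hlong, -⟩ := hls
  have hS (h : (L ∩ GLegVerts T v ∩ Branch T v y₂).Nontrivial) :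
      (L ∩ Branch T v y₂).Nontrivial :=
    h.mono fun w hw => ⟨hw.1.1, hw.2⟩
  by_cases hcore : ∃ c ∈ Branch T v y₂, IsCore T c
  · obtain ⟨c, hc, hcore⟩ := hcore
    by_cases hx : IsModifiedLeg T v y₂
    · rcases hmod y₂ hx with
        h | ⟨-, -, -, -, -, -, ⟨w₁, hw₁, w₂, hw₂, hw, -⟩, -⟩ | ⟨-, -, -, -, h, -⟩
      · exact absurd h (hm1 ⟨y₁, h₁, h0⟩ y₂ hx)
      · exact hS ⟨w₁, hw₁, w₂, hw₂, hw⟩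
      · exact hS h
    · exact hT.nontrivial_inter_branch_of_isCore hL hy₂ hx hc hcore
  push Not at hcore
  have h₂ : IsStandardLeg T v y₂ :=
    ⟨hy₂, fun w hw => not_lt.1 fun h3 => hcore w hw h3⟩
  have long {y y' : α} (h : IsStandardLeg T v y) (h' : IsStandardLeg T v y') (hne : y ≠ y') :
      IsLongLeg T v y :=
    ⟨h, fun hshort => hv ⟨hdeg, y, y', hne, ⟨h, hshort⟩, h'⟩⟩
  exact hS (hlong y₁ (long h₁ h₂ hne) h0 y₂ (long h₂ h₁ hne.symm) hne.symm)

/-- At most one branch of `v` is free of landmarks, and if one is, the local set conditions put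
two landmarks into another branch. -/
lemma IsLocalSet.nontrivial_sdiff_branch (hls : IsLocalSet T v (L ∩ GLegVerts T v))
    (hT : T.IsTree) (hL : IsLandmarkSet T L) (hv : IsRegularCore T v) {x : α} (hvx : T.Adj v x) :
    (L \ Branch T v x).Nontrivial := by
  classical
  set N := (T.neighborFinset v).erase x
  have hN {y : α} (hy : y ∈ N) : T.Adj v y ∧ y ≠ x := by
    simpa [N, and_comm] using hy
  have hsub {y : α} (hy : y ∈ N) : L ∩ Branch T v y ⊆ L \ Branch T v x := fun w hw =>
    ⟨hw.1, Set.disjoint_left.1 (hT.disjoint_branch (hN hy).1 hvx (hN hy).2) hw.2⟩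
  have two {y₁ y₂ : α} (h₁ : y₁ ∈ N) (h₂ : y₂ ∈ N) (hne : y₁ ≠ y₂)
      (hl₁ : (L ∩ Branch T v y₁).Nonempty) (hl₂ : (L ∩ Branch T v y₂).Nonempty) :
      (L \ Branch T v x).Nontrivial := by
    obtain ⟨τ₁, hτ₁⟩ := hl₁
    obtain ⟨τ₂, hτ₂⟩ := hl₂
    refine ⟨τ₁, hsub h₁ hτ₁, τ₂, hsub h₂ hτ₂, fun e => ?_⟩
    exact Set.disjoint_left.1 (hT.disjoint_branch (hN h₁).1 (hN h₂).1 hne) hτ₁.2 (e ▸ hτ₂.2)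
  have empty {y : α} (hy : T.Adj v y) (h : ¬ (L ∩ Branch T v y).Nonempty) :
      IsStandardLeg T v y ∧ SolS0 T v y (L ∩ GLegVerts T v) :=
    ⟨⟨hy, fun w hw => not_lt.1 fun h3 => h (hT.nonempty_inter_branch_of_isCore hL hy hw h3)⟩,
      Set.eq_empty_of_forall_notMem fun w hw => h ⟨w, hw.1.1, hw.2⟩⟩
  have hcard : N.card + 1 = T.degree v :=
    Finset.card_erase_add_one ((mem_neighborFinset _ _ _).2 hvx)
  have hcore : 3 ≤ T.degree v := hv.1
  by_cases hall : ∀ y ∈ N, (L ∩ Branch T v y).Nonempty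
  · obtain ⟨y₁, h₁, y₂, h₂, hne⟩ := Finset.one_lt_card.1 (by omega : 1 < N.card)
    exact two h₁ h₂ hne (hall y₁ h₁) (hall y₂ h₂)
  simp only [not_forall] at hall
  obtain ⟨y₁, h₁, he⟩ := hall
  obtain ⟨hstd₁, h0₁⟩ := empty (hN h₁).1 he
  have others {y : α} (hy : y ∈ N.erase y₁) : (L ∩ Branch T v y).Nonempty := by
    obtain ⟨hne, hy⟩ := Finset.mem_erase.1 hy
    by_contra h
    obtain ⟨hstd, h0⟩ := empty (hN hy).1 h
    exact hls.2.1 y y₁ hstd hstd₁ hne h0 h0₁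
  have hcard' := Finset.card_erase_add_one h₁
  rcases (by omega : 1 < (N.erase y₁).card ∨ (N.erase y₁).card = 1) with h | h
  · obtain ⟨y₂, h₂, y₃, h₃, hne⟩ := Finset.one_lt_card.1 h
    exact two (Finset.mem_of_mem_erase h₂) (Finset.mem_of_mem_erase h₃) hne (others h₂) (others h₃)
  · obtain ⟨y₂, hy₂⟩ := Finset.card_eq_one.1 h
    obtain ⟨hne, h₂⟩ := Finset.mem_erase.1 (hy₂ ▸ Finset.mem_singleton_self y₂)
    exact (hls.nontrivial_inter_branch_of_solS0 hT hL hv.2 (by omega) hstd₁ h0₁ (hN h₂).1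
      hne.symm).mono (hsub h₂)

lemma exists_branch_of_not_isThrifty (hT : T.IsTree)
    (hnt : ¬ IsThrifty T v (L ∩ GLegVerts T v)) :
    ∃ x p q, T.Adj v x ∧ 2 < (L ∩ Branch T v x).ncard ∧
      ∀ w ∈ Branch T v x, ∀ z ∈ Branch T v x, w ≠ z → T.dist v w = T.dist v z →
        (w = p ∧ z = q) ∨ (w = q ∧ z = p) := by
  have hS {x : α} (hx : IsGLeg T v x) :
      L ∩ GLegVerts T v ∩ Branch T v x = L ∩ Branch T v x := by
    ext w
    exact ⟨fun h => ⟨h.1.1, h.2⟩, fun h => ⟨⟨h.1, x, hx, h.2⟩, h.2⟩⟩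
  have three {x : α} (hx : IsGLeg T v x) (h : (L ∩ GLegVerts T v ∩ Branch T v x).Nontrivial)
      (hc : (L ∩ GLegVerts T v ∩ Branch T v x).ncard ≠ 2) : 2 < (L ∩ Branch T v x).ncard := by
    rw [hS hx] at h hc
    have := Set.one_lt_ncard_iff_nontrivial.2 h
    omega
  simp only [IsThrifty, not_and_or, not_forall] at hnt
  rcases hnt with ⟨x, hx, h2, hc⟩ | ⟨x, hx, hm, hc⟩
  · exact ⟨x, x, x, hx.1, three (.inl hx) h2 hc,
      fun w hw z hz hne hd => absurd (hx.eq_of_dist_eq hT hw hz hd) hne⟩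
  · obtain ⟨u, a, b, hp, h⟩ : ∃ u a b, MLegPair T v x u a b ∧
        (L ∩ GLegVerts T v ∩ Branch T v x).Nontrivial := by
      rcases hm with ⟨u, a, b, hp, -, -, ⟨w₁, h₁, w₂, h₂, hne, -⟩, -⟩ | ⟨u, a, b, hp, h, -⟩
      exacts [⟨u, a, b, hp, w₁, h₁, w₂, h₂, hne⟩, ⟨u, a, b, hp, h⟩]
    exact ⟨x, a, b, hx.1, three (.inr hx) h hc,
      fun w hw z hz hne hd => hx.eq_or_eq_of_dist_eq hT hp hw hz hne hd⟩

end LocalSets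

/-- if the restriction of a landmark set `L` to the g-legs of a regular
core `v` is a local set that is not thrifty, then `L` is not minimal with respect to
set inclusion. -/
theorem non_thrifty_landmark_not_minimal
    (T : SimpleGraph V) [DecidableRel T.Adj] (hT : T.IsTree)
    (L : Set V) (hL : IsLandmarkSet T L)
    (v : V) (hv : IsRegularCore T v)
    (hls : IsLocalSet T v (L ∩ GLegVerts T v))
    (hnt : ¬ IsThrifty T v (L ∩ GLegVerts T v)) :
    ∃ L' : Set V, L' ⊂ L ∧ IsLandmarkSet T L' := by
  obtain ⟨x, p, q, hvx, hcard, hpairs⟩ := exists_branch_of_not_isThrifty hT hnt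
  obtain ⟨r, hr, hpq⟩ :=
    hL.exists_mem_hasTwoSeparators_sdiff_singleton Set.inter_subset_left hcard p q
  refine ⟨L \ {r}, Set.sdiff_singleton_ssubset.2 hr.1,
    hL.sdiff_singleton_of_branch hT hvx (hls.nontrivial_sdiff_branch hT hL hv hvx) hr
      (Set.nontrivial_sdiff_singleton_of_two_lt_ncard hcard r) ?_⟩
  intro u hu w hw hne hd hu' hw'
  rcases hpairs u hu w hw hne hd with ⟨rfl, rfl⟩ | ⟨rfl, rfl⟩
  · exact hpq hne hu' hw'
  · exact (hpq hne.symm hw' hu').symm
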